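/- arXiv:2012.03582 — 3 statements merged into one kernel-verified Lean document; each statement's English description precedes it below -/
import Mathlib

section
/- If (u, v) is a matched edge in a graph G with matching M, then tenacity(u) = tenacity(v) = tenacity(u, v), where tenacity of a vertex w is evenlevel(w) + oddlevel(w) and tenacity of a matched edge (u,v) is oddlevel(u) + oddlevel(v) + 1. -/
open scoped Classical

universe u

variable {V : Type u}

/-- A finite-or-infinite undirected graph together with a matching. -/
structure MatchedGraph (V : Type u) where
  adj : V → V → Prop
  symm : ∀ u v, adj u v → adj v u
  loopless : ∀ v, ¬ adj v v
  M : V → V → Prop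
  M_symm : ∀ u v, M u v → M v u
  M_sub : ∀ u v, M u v → adj u v
  M_matching : ∀ u v w, M u v → M u w → v = w

namespace MatchedGraph

/-- A vertex is unmatched if no matched edge is incident to it. -/
def unmatched (g : MatchedGraph V) (v : V) : Prop := ∀ u, ¬ g.M v u

/-- `p` is a simple alternating path starting at `b` and ending at `v`,
whose first edge is unmatched and whose edges alternate unmatched/matched.
(The `i`-th edge is matched iff `i` is odd.) -/
def AltPath (g : MatchedGraph V) (p : List V) (b v : V) : Prop :=
  p.head? = some b ∧ p.getLast? = some v ∧ p.Nodup ∧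
  ∀ i, i + 1 < p.length →
    g.adj (p.getD i b) (p.getD (i + 1) b) ∧
      (g.M (p.getD i b) (p.getD (i + 1) b) ↔ i % 2 = 1)

/-- An alternating path from an *unmatched* vertex `f` to `v`. -/
def AltPathFrom (g : MatchedGraph V) (p : List V) (f v : V) : Prop :=
  g.unmatched f ∧ g.AltPath p f v

/-- Minimum length of an even alternating path from an unmatched vertex to `v`. -/
noncomputable def evenlevel (g : MatchedGraph V) (v : V) : ℕ∞ :=
  sInf {n : ℕ∞ | ∃ p f, g.AltPathFrom p f v ∧ Even (p.length - 1) ∧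
    n = ((p.length - 1 : ℕ) : ℕ∞)}

/-- Minimum length of an odd alternating path from an unmatched vertex to `v`. -/
noncomputable def oddlevel (g : MatchedGraph V) (v : V) : ℕ∞ :=
  sInf {n : ℕ∞ | ∃ p f, g.AltPathFrom p f v ∧ Odd (p.length - 1) ∧
    n = ((p.length - 1 : ℕ) : ℕ∞)}

noncomputable def tenacity (g : MatchedGraph V) (v : V) : ℕ∞ :=
  g.evenlevel v + g.oddlevel v

noncomputable def minlevel (g : MatchedGraph V) (v : V) : ℕ∞ :=
  min (g.evenlevel v) (g.oddlevel v)

noncomputable def maxlevel (g : MatchedGraph V) (v : V) : ℕ∞ :=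
  max (g.evenlevel v) (g.oddlevel v)

/-- Minimum length of an augmenting path: an alternating path between two
distinct unmatched vertices. -/
noncomputable def lm (g : MatchedGraph V) : ℕ∞ :=
  sInf {n : ℕ∞ | ∃ p f v, g.AltPathFrom p f v ∧ g.unmatched v ∧ f ≠ v ∧
    n = ((p.length - 1 : ℕ) : ℕ∞)}

/-- Minimum tenacity of any vertex. -/
noncomputable def tm (g : MatchedGraph V) : ℕ∞ := ⨅ v, g.tenacity v

/-- `p` is an `evenlevel(v)` path starting at the unmatched vertex `f`. -/
def IsEvenlevelPath (g : MatchedGraph V) (p : List V) (f v : V) : Prop :=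
  g.AltPathFrom p f v ∧ Even (p.length - 1) ∧
    ((p.length - 1 : ℕ) : ℕ∞) = g.evenlevel v

/-- `p` is an `oddlevel(v)` path starting at the unmatched vertex `f`. -/
def IsOddlevelPath (g : MatchedGraph V) (p : List V) (f v : V) : Prop :=
  g.AltPathFrom p f v ∧ Odd (p.length - 1) ∧
    ((p.length - 1 : ℕ) : ℕ∞) = g.oddlevel v

/-- `p` is a `minlevel(v)` path starting at the unmatched vertex `f`. -/
def IsMinlevelPath (g : MatchedGraph V) (p : List V) (f v : V) : Prop :=
  g.AltPathFrom p f v ∧ ((p.length - 1 : ℕ) : ℕ∞) = g.minlevel v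

/-- `p` is a `maxlevel(v)` path starting at the unmatched vertex `f`. -/
def IsMaxlevelPath (g : MatchedGraph V) (p : List V) (f v : V) : Prop :=
  g.AltPathFrom p f v ∧ ((p.length - 1 : ℕ) : ℕ∞) = g.maxlevel v

/-- The vertex at position `i` of `p` (whose prefix from `f` has length `i`)
is BFS-honest w.r.t. `p`. -/
def BFSHonest (g : MatchedGraph V) (p : List V) (f : V) (i : ℕ) : Prop :=
  (Even i → g.evenlevel (p.getD i f) = (i : ℕ∞)) ∧
  (Odd i → g.oddlevel (p.getD i f) = (i : ℕ∞))

/-- `u` is a predecessor of `v`: `(u, v)` is the last edge of some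
`minlevel(v)` path. -/
def IsPred (g : MatchedGraph V) (u v : V) : Prop :=
  ∃ p f, g.IsMinlevelPath p f v ∧ 2 ≤ p.length ∧ p.getD (p.length - 2) f = u

/-- A prop is an edge which is the last edge of a minlevel path to one of its
endpoints. -/
def IsPropEdge (g : MatchedGraph V) (u v : V) : Prop :=
  g.IsPred u v ∨ g.IsPred v u

/-- A bridge is an edge that is not a prop. -/
def IsBridge (g : MatchedGraph V) (u v : V) : Prop :=
  g.adj u v ∧ ¬ g.IsPropEdge u v

/-- Tenacity of an edge. -/
noncomputable def etenacity (g : MatchedGraph V) (u v : V) : ℕ∞ :=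
  if g.M u v then g.oddlevel u + g.oddlevel v + 1
  else g.evenlevel u + g.evenlevel v + 1

/-- The set `B(v)` of all `F(p, v)`: for each `evenlevel(v)` or `oddlevel(v)`
path `p`, the vertex on `p` farthest from the unmatched endpoint among the
vertices of tenacity greater than `tenacity(v)`. -/
def Bset (g : MatchedGraph V) (v : V) : Set V :=
  {b | ∃ p f i, (g.IsEvenlevelPath p f v ∨ g.IsOddlevelPath p f v) ∧
    i < p.length ∧ b = p.getD i f ∧ g.tenacity v < g.tenacity b ∧
    ∀ k, i < k → k < p.length → g.tenacity (p.getD k f) ≤ g.tenacity v}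

/-- `b` is the (unique) base of `v`. -/
def baseOf (g : MatchedGraph V) (v b : V) : Prop := g.Bset v = {b}

/-- Iterated bases: `iterBase k v b` means `b = base^k(v)` (with `base^0(v) = v`). -/
def iterBase (g : MatchedGraph V) : ℕ → V → V → Prop
  | 0, v, b => v = b
  | k + 1, v, b => ∃ u, g.iterBase k v u ∧ g.baseOf u b

/-- A vertex is outer if `evenlevel(v) < oddlevel(v)`. -/
def IsOuter (g : MatchedGraph V) (v : V) : Prop := g.evenlevel v < g.oddlevel v

/-- A vertex is inner if it is not outer. -/
def IsInner (g : MatchedGraph V) (v : V) : Prop := g.oddlevel v ≤ g.evenlevel v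

/-- The set `S_{b,t}` of vertices of tenacity `t` with base `b`. -/
def Sset (g : MatchedGraph V) (t : ℕ) (b : V) : Set V :=
  {v | g.tenacity v = (t : ℕ∞) ∧ g.baseOf v b}

/-- The blossom `B_{b,t}`, defined recursively. -/
def blossom (g : MatchedGraph V) : ℕ → V → Set V
  | 0, _ => ∅
  | 1, _ => ∅
  | t + 2, b => g.Sset (t + 2) b ∪
      ⋃ v ∈ {v | (v ∈ g.Sset (t + 2) b ∨ v = b) ∧ g.IsOuter v}, blossom g t v

/-- The nesting depth `N(B_{b,t})` of a blossom. -/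
noncomputable def ndepth (g : MatchedGraph V) [Fintype V] : ℕ → V → ℕ
  | 0, _ => 0
  | 1, _ => 0
  | t + 2, b =>
    if (g.Sset (t + 2) b).Nonempty then
      1 + Finset.univ.sup (fun v =>
        if (v ∈ g.Sset (t + 2) b ∨ v = b) ∧ g.IsOuter v then ndepth g t v else 0)
    else ndepth g t b

/-- `evenlevel(b; v)`: minimum even length of an alternating path from `b` to
`v` starting with an unmatched edge. -/
noncomputable def evenlevelFrom (g : MatchedGraph V) (b v : V) : ℕ∞ :=
  sInf {n : ℕ∞ | ∃ p, g.AltPath p b v ∧ Even (p.length - 1) ∧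
    n = ((p.length - 1 : ℕ) : ℕ∞)}

/-- `oddlevel(b; v)`: minimum odd length of an alternating path from `b` to
`v` starting with an unmatched edge. -/
noncomputable def oddlevelFrom (g : MatchedGraph V) (b v : V) : ℕ∞ :=
  sInf {n : ℕ∞ | ∃ p, g.AltPath p b v ∧ Odd (p.length - 1) ∧
    n = ((p.length - 1 : ℕ) : ℕ∞)}

end MatchedGraph

/-! Appending the matched edge `(v, u)` to an odd alternating path to `v` gives an even one to
`u` (the path cannot already pass through `u`), and conversely an even alternating path to `u`
must end with that matched edge. Hence `evenlevel u = oddlevel v + 1` and, symmetrically,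
`evenlevel v = oddlevel u + 1`, so all three tenacities equal `oddlevel u + oddlevel v + 1`. -/

namespace MatchedGraph

variable {g : MatchedGraph V} {p : List V} {f u v w : V}

lemma ne_of_M (h : g.M u v) : u ≠ v :=
  fun e => g.loopless v (g.M_sub v v (e ▸ h))

namespace AltPath

lemma ne_nil (h : g.AltPath p f v) : p ≠ [] := by
  rintro rfl
  simp [AltPath] at h

lemma getD_zero (h : g.AltPath p f v) : p.getD 0 f = f := by
  obtain ⟨hhead, -⟩ := h
  cases p <;> simp_all

lemma getD_length_sub_one (h : g.AltPath p f v) : p.getD (p.length - 1) f = v := by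
  have hlast := h.2.1
  rw [List.getLast?_eq_getElem?] at hlast
  simp [List.getD_eq_getElem?_getD, hlast]

lemma getD_inj (h : g.AltPath p f v) {i j : ℕ} (hi : i < p.length) (hj : j < p.length)
    (he : p.getD i f = p.getD j f) : i = j := by
  rw [List.getD_eq_getElem _ _ hi, List.getD_eq_getElem _ _ hj] at he
  exact h.2.2.1.getElem_inj_iff.1 he

lemma M_getD_succ (h : g.AltPath p f v) {i : ℕ} (hi : i + 1 < p.length) (hodd : Odd i) :
    g.M (p.getD i f) (p.getD (i + 1) f) :=
  ((h.2.2.2 i hi).2).2 (Nat.odd_iff.1 hodd)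

lemma take (h : g.AltPath p f v) {j : ℕ} (hj : j < p.length) :
    g.AltPath (p.take (j + 1)) f (p.getD j f) := by
  obtain ⟨hhead, -, hnodup, hstep⟩ := h
  have hget : ∀ i < j + 1, (p.take (j + 1)).getD i f = p.getD i f := fun i hi => by
    simp [List.getD_eq_getElem?_getD, hi]
  refine ⟨by simp [List.head?_take, hhead], ?_, hnodup.sublist (List.take_sublist _ _),
    fun i hi => ?_⟩
  · simp [List.getLast?_eq_getElem?, List.getD_eq_getElem?_getD,
      Nat.min_eq_left (Nat.succ_le_of_lt hj), List.getElem?_eq_getElem hj]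
  · rw [List.length_take] at hi
    rw [hget i (by omega), hget (i + 1) (by omega)]
    exact hstep i (by omega)

lemma concat (h : g.AltPath p f w) (hu : u ∉ p) (hadj : g.adj w u)
    (hM : g.M w u ↔ (p.length - 1) % 2 = 1) : g.AltPath (p ++ [u]) f u := by
  have hlast := h.getD_length_sub_one
  have hpos := List.length_pos_iff.2 h.ne_nil
  obtain ⟨hhead, -, hnodup, hstep⟩ := h
  refine ⟨by simp [hhead], List.getLast?_concat,
    List.nodup_append.2 ⟨hnodup, List.nodup_singleton u, by grind⟩, fun i hi => ?_⟩
  rw [List.length_append, List.length_singleton] at hi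
  rw [List.getD_append _ _ _ _ (by omega)]
  rcases Nat.lt_or_ge (i + 1) p.length with hlt | hge
  · rw [List.getD_append _ _ _ _ hlt]
    exact hstep i hlt
  · obtain rfl : i = p.length - 1 := by omega
    rw [Nat.sub_add_cancel hpos, List.getD_append_right _ _ _ _ le_rfl, hlast]
    simpa using ⟨hadj, hM⟩

end AltPath

namespace AltPathFrom

lemma evenlevel_le (h : g.AltPathFrom p f v) (he : Even (p.length - 1)) :
    g.evenlevel v ≤ ((p.length - 1 : ℕ) : ℕ∞) :=
  sInf_le ⟨p, f, h, he, rfl⟩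

lemma oddlevel_le (h : g.AltPathFrom p f v) (ho : Odd (p.length - 1)) :
    g.oddlevel v ≤ ((p.length - 1 : ℕ) : ℕ∞) :=
  sInf_le ⟨p, f, h, ho, rfl⟩

lemma length_ne_one_of_M (h : g.AltPathFrom p f v) (hM : g.M v w) : p.length ≠ 1 := by
  intro h1
  have hfv : f = v := by
    rw [← h.2.getD_zero, ← h.2.getD_length_sub_one, h1]
  exact h.1 w (hfv ▸ hM)

/-- The partner `u` of the endpoint `v` of an odd alternating path cannot lie on the path: an
interior vertex of the path is matched to one of its neighbours on it, which is never `v`. -/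
lemma not_mem_of_M (h : g.AltPathFrom p f v) (ho : Odd (p.length - 1)) (hM : g.M u v) :
    u ∉ p := by
  intro hu
  obtain ⟨i, hi, rfl⟩ := List.getElem_of_mem hu
  have hlast := h.2.getD_length_sub_one
  have hui : p.getD i f = p[i] := List.getD_eq_getElem _ _ hi
  have hi0 : i ≠ 0 := by
    rintro rfl
    exact h.1 v (by rwa [← h.2.getD_zero, hui])
  have him : i ≠ p.length - 1 := by
    rintro rfl
    exact ne_of_M hM (by rw [← hui, hlast])
  rcases Nat.even_or_odd i with hie | hio
  · have hodd : Odd (i - 1) := Nat.Even.sub_odd (by omega) hie odd_one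
    have hM' := h.2.M_getD_succ (i := i - 1) (by omega) hodd
    rw [Nat.sub_add_cancel (by omega), hui] at hM'
    have := h.2.getD_inj (i := i - 1) (j := p.length - 1) (by omega) (by omega)
      (by rw [hlast]; exact g.M_matching _ _ _ (g.M_symm _ _ hM') hM)
    omega
  · have hM' := h.2.M_getD_succ (i := i) (by omega) hio
    rw [hui] at hM'
    have := h.2.getD_inj (i := i + 1) (j := p.length - 1) (by omega) (by omega)
      (by rw [hlast]; exact g.M_matching _ _ _ hM' hM)
    rw [← this] at ho
    exact Nat.not_even_iff_odd.2 ho hio.add_one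

lemma dropLast_of_M (h : g.AltPathFrom p f u) (he : Even (p.length - 1)) (hM : g.M u v) :
    g.AltPathFrom p.dropLast f v := by
  have hlen : 3 ≤ p.length := by
    have := List.length_pos_iff.2 h.2.ne_nil
    have := h.length_ne_one_of_M hM
    rcases he with ⟨k, hk⟩
    omega
  have hodd : Odd (p.length - 2) := by
    rcases he with ⟨k, hk⟩
    exact ⟨k - 1, by omega⟩
  have hM' := h.2.M_getD_succ (i := p.length - 2) (by omega) hodd
  rw [show p.length - 2 + 1 = p.length - 1 by omega, h.2.getD_length_sub_one] at hM'
  have hv : p.getD (p.length - 2) f = v := g.M_matching _ _ _ (g.M_symm _ _ hM') hM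
  have htake := h.2.take (j := p.length - 2) (by omega)
  rw [hv, show p.length - 2 + 1 = p.length - 1 by omega, ← List.dropLast_eq_take] at htake
  exact ⟨h.1, htake⟩

end AltPathFrom

lemma oddlevel_add_one_le_evenlevel (hM : g.M u v) : g.oddlevel v + 1 ≤ g.evenlevel u := by
  refine le_sInf ?_
  rintro _ ⟨p, f, hp, he, rfl⟩
  have hpos := List.length_pos_iff.2 hp.2.ne_nil
  have hq := hp.dropLast_of_M he hM
  have hlen : p.dropLast.length - 1 + 1 = p.length - 1 := by
    have := hp.length_ne_one_of_M hM
    rw [List.length_dropLast]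
    omega
  have hodd : Odd (p.dropLast.length - 1) := by
    rcases he with ⟨k, hk⟩
    exact ⟨k - 1, by omega⟩
  calc g.oddlevel v + 1 ≤ ((p.dropLast.length - 1 : ℕ) : ℕ∞) + 1 := by
        gcongr
        exact hq.oddlevel_le hodd
    _ = ((p.length - 1 : ℕ) : ℕ∞) := by rw [← hlen]; push_cast; rfl

lemma evenlevel_le_oddlevel_add_one (hM : g.M u v) : g.evenlevel u ≤ g.oddlevel v + 1 := by
  rw [oddlevel, ENat.sInf_add]
  refine le_iInf₂ ?_
  rintro _ ⟨p, f, hp, ho, rfl⟩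
  have hpu := hp.2.concat (hp.not_mem_of_M ho hM) (g.M_sub _ _ (g.M_symm _ _ hM))
    (iff_of_true (g.M_symm _ _ hM) (Nat.odd_iff.1 ho))
  have hlen : (p ++ [u]).length - 1 = p.length - 1 + 1 := by
    have := List.length_pos_iff.2 hp.2.ne_nil
    simp only [List.length_append, List.length_singleton]
    omega
  have := AltPathFrom.evenlevel_le ⟨hp.1, hpu⟩ (by rw [hlen]; exact ho.add_one)
  rwa [hlen, Nat.cast_add, Nat.cast_one] at this

lemma evenlevel_eq_oddlevel_add_one (hM : g.M u v) : g.evenlevel u = g.oddlevel v + 1 :=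
  le_antisymm (evenlevel_le_oddlevel_add_one hM) (oddlevel_add_one_le_evenlevel hM)

end MatchedGraph

/-- If `(u, v)` is a matched edge then
`tenacity(u) = tenacity(v) = tenacity(u, v)`. -/
theorem tenacity_eq_of_matched (g : MatchedGraph V) (u v : V) (h : g.M u v) :
    g.tenacity u = g.tenacity v ∧ g.tenacity v = g.etenacity u v := by
  have hu := g.evenlevel_eq_oddlevel_add_one h
  have hv := g.evenlevel_eq_oddlevel_add_one (g.M_symm _ _ h)
  refine ⟨?_, ?_⟩
  · rw [MatchedGraph.tenacity, MatchedGraph.tenacity, hu, hv]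
    ring
  · rw [MatchedGraph.tenacity, MatchedGraph.etenacity, if_pos h, hv]
    ring
end

section
/- Let p be an evenlevel(v) or oddlevel(v) path (a minimum length alternating path of the appropriate parity from an unmatched vertex f to v), and let u lie on p with tenacity(u) >= tenacity(v). Then u is BFS-honest with respect to p, i.e., the length of the prefix p[f to u] equals evenlevel(u) if this length is even, and equals oddlevel(u) if this length is odd. -/
open scoped Classical

universe u

variable {V : Type u}

/-! Write `z = p[i]` and `L = |p|`, and suppose some alternating path `q` of the parity of `i`
reaches `z` in `m < i` steps. Follow `q` until it first meets `p[i..L]`, say at `p[j]`. If the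
parities of the two positions agree, continuing along `p` reaches `v` by a path of the parity of
`L` that is shorter than `p`, which is impossible. Otherwise walking back along `p` reaches `z` with
the other parity in at most `m + L - i` steps, so `tenacity(z) ≤ 2m + L - i`. Since
`tenacity(v) ≤ tenacity(z)`, the level `l` of `v` of the parity opposite to `L` is then smaller
than `i`, and the same argument for a path of length `l` to `v` gives
`tenacity(z) ≤ m + l + L - i < L + l = tenacity(v)`. -/

namespace MatchedGraph

variable {g : MatchedGraph V}

/-- The offset `c` lets a segment of another path, read forwards or backwards, keep the matched
edges it had there. -/
structure IsAltSeq (g : MatchedGraph V) (c : ℕ) (φ : ℕ → V) (n : ℕ) : Prop where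
  injOn : Set.InjOn φ (Set.Iic n)
  adj : ∀ t < n, g.adj (φ t) (φ (t + 1))
  matched_iff : ∀ t < n, g.M (φ t) (φ (t + 1)) ↔ (c + t) % 2 = 1

theorem M_comm {u v : V} : g.M u v ↔ g.M v u := ⟨g.M_symm u v, g.M_symm v u⟩

namespace IsAltSeq

variable {c n : ℕ} {φ : ℕ → V}

theorem mono (h : g.IsAltSeq c φ n) {m : ℕ} (hmn : m ≤ n) : g.IsAltSeq c φ m where
  injOn := h.injOn.mono (Set.Iic_subset_Iic.mpr hmn)
  adj t ht := h.adj t (by omega)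
  matched_iff t ht := h.matched_iff t (by omega)

theorem shift (h : g.IsAltSeq c φ n) {j k : ℕ} (hjk : j + k ≤ n) :
    g.IsAltSeq (c + j) (fun t => φ (j + t)) k where
  injOn s hs t ht hst := by
    simp only [Set.mem_Iic] at hs ht
    have := h.injOn (Set.mem_Iic.mpr (by omega : j + s ≤ n))
      (Set.mem_Iic.mpr (by omega : j + t ≤ n)) hst
    omega
  adj t ht := by simpa only [Nat.add_assoc] using h.adj (j + t) (by omega)
  matched_iff t ht := by
    simpa only [Nat.add_assoc] using h.matched_iff (j + t) (by omega)

theorem reverse (h : g.IsAltSeq c φ n) {j k : ℕ} (hj : j ≤ n) (hk : k ≤ j) :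
    g.IsAltSeq (c + j + 1) (fun t => φ (j - t)) k where
  injOn s hs t ht hst := by
    simp only [Set.mem_Iic] at hs ht
    have := h.injOn (Set.mem_Iic.mpr (by omega : j - s ≤ n))
      (Set.mem_Iic.mpr (by omega : j - t ≤ n)) hst
    omega
  adj t ht := by
    have hedge := h.adj (j - (t + 1)) (by omega)
    rw [show j - (t + 1) + 1 = j - t by omega] at hedge
    exact g.symm _ _ hedge
  matched_iff t ht := by
    have hedge := h.matched_iff (j - (t + 1)) (by omega)
    rw [show j - (t + 1) + 1 = j - t by omega] at hedge
    rw [M_comm, hedge]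
    omega

theorem append (hφ : g.IsAltSeq c φ n) {c' b : ℕ} {ψ : ℕ → V} (hψ : g.IsAltSeq c' ψ b)
    (hc : (c + n) % 2 = c' % 2) (hjoin : ψ 0 = φ n)
    (hdisj : ∀ s ≤ n, ∀ t, 0 < t → t ≤ b → φ s ≠ ψ t) :
    g.IsAltSeq c (fun t => if t ≤ n then φ t else ψ (t - n)) (n + b) := by
  set χ : ℕ → V := fun t => if t ≤ n then φ t else ψ (t - n)
  have hχφ : ∀ t ≤ n, χ t = φ t := fun t ht => if_pos ht
  have hχψ : ∀ t, n ≤ t → χ t = ψ (t - n) := by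
    intro t ht
    rcases ht.lt_or_eq with ht | rfl
    · exact if_neg (by omega)
    · simp [χ, hjoin]
  refine ⟨fun s hs t ht hst => ?_, fun t ht => ?_, fun t ht => ?_⟩
  · simp only [Set.mem_Iic] at hs ht
    rcases le_or_gt s n with hsn | hsn <;> rcases le_or_gt t n with htn | htn
    · exact hφ.injOn hsn htn (by rwa [hχφ s hsn, hχφ t htn] at hst)
    · rw [hχφ s hsn, hχψ t htn.le] at hst
      exact absurd hst (hdisj s hsn (t - n) (by omega) (by omega))
    · rw [hχψ s hsn.le, hχφ t htn] at hst
      exact absurd hst.symm (hdisj t htn (s - n) (by omega) (by omega))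
    · rw [hχψ s hsn.le, hχψ t htn.le] at hst
      have := hψ.injOn (Set.mem_Iic.mpr (by omega : s - n ≤ b))
        (Set.mem_Iic.mpr (by omega : t - n ≤ b)) hst
      omega
  · rcases lt_or_ge t n with htn | htn
    · rw [hχφ t htn.le, hχφ (t + 1) htn]; exact hφ.adj t htn
    · rw [hχψ t htn, hχψ (t + 1) (by omega), show t + 1 - n = t - n + 1 by omega]
      exact hψ.adj (t - n) (by omega)
  · rcases lt_or_ge t n with htn | htn
    · rw [hχφ t htn.le, hχφ (t + 1) htn]; exact hφ.matched_iff t htn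
    · rw [hχψ t htn, hχψ (t + 1) (by omega), show t + 1 - n = t - n + 1 by omega,
        hψ.matched_iff (t - n) (by omega)]
      omega

end IsAltSeq

theorem AltPath.getD_zero_s2 {p : List V} {b v : V} (h : g.AltPath p b v) : p.getD 0 b = b := by
  rw [List.getD_eq_getElem?_getD, ← List.head?_eq_getElem?, h.1, Option.getD_some]

theorem AltPath.getD_length_sub_one_s2 {p : List V} {b v : V} (h : g.AltPath p b v) :
    p.getD (p.length - 1) b = v := by
  rw [List.getD_eq_getElem?_getD, ← List.getLast?_eq_getElem?, h.2.1, Option.getD_some]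

theorem AltPath.isAltSeq {p : List V} {b v : V} (h : g.AltPath p b v) :
    g.IsAltSeq 0 (p.getD · b) (p.length - 1) := by
  have hpos : 0 < p.length := List.length_pos_iff.mpr (by rintro rfl; simp [AltPath] at h)
  refine ⟨fun s hs t ht hst => ?_, fun t ht => (h.2.2.2 t (by omega)).1, fun t ht => ?_⟩
  · simp only [Set.mem_Iic] at hs ht
    simp only [List.getD_eq_getElem p b (show s < p.length by omega),
      List.getD_eq_getElem p b (show t < p.length by omega)] at hst
    exact (h.2.2.1.getElem_inj_iff).mp hst
  · simpa using (h.2.2.2 t (by omega)).2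

theorem IsAltSeq.altPath {n : ℕ} {φ : ℕ → V} (h : g.IsAltSeq 0 φ n) :
    g.AltPath ((List.range (n + 1)).map φ) (φ 0) (φ n) := by
  have hget : ∀ t < n + 1, ((List.range (n + 1)).map φ).getD t (φ 0) = φ t := by
    intro t ht
    simp [List.getD_eq_getElem?_getD, ht]
  refine ⟨by simp [List.head?_range], by simp [List.getLast?_range], ?_, fun t ht => ?_⟩
  · exact List.nodup_range.map_on fun s hs t ht hst =>
      h.injOn (by simpa [Nat.lt_succ_iff] using hs) (by simpa [Nat.lt_succ_iff] using ht) hst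
  · simp only [List.length_map, List.length_range] at ht
    rw [hget t (by omega), hget (t + 1) ht]
    exact ⟨h.adj t (by omega), by simpa using h.matched_iff t (by omega)⟩

noncomputable def parityLevel (g : MatchedGraph V) (r : ℕ) (v : V) : ℕ∞ :=
  sInf {n : ℕ∞ | ∃ p f, g.AltPathFrom p f v ∧ (p.length - 1) % 2 = r % 2 ∧
    n = ((p.length - 1 : ℕ) : ℕ∞)}

theorem parityLevel_congr {r s : ℕ} (h : r % 2 = s % 2) (v : V) :
    g.parityLevel r v = g.parityLevel s v := by
  simp only [parityLevel, h]

theorem evenlevel_eq_parityLevel {r : ℕ} (hr : r % 2 = 0) (v : V) :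
    g.evenlevel v = g.parityLevel r v := by
  simp only [evenlevel, parityLevel, hr, Nat.even_iff]

theorem oddlevel_eq_parityLevel {r : ℕ} (hr : r % 2 = 1) (v : V) :
    g.oddlevel v = g.parityLevel r v := by
  simp only [oddlevel, parityLevel, hr, Nat.odd_iff]

theorem tenacity_eq_parityLevel_add (r : ℕ) (v : V) :
    g.tenacity v = g.parityLevel r v + g.parityLevel (r + 1) v := by
  rcases Nat.mod_two_eq_zero_or_one r with hr | hr
  · rw [tenacity, evenlevel_eq_parityLevel hr, oddlevel_eq_parityLevel (r := r + 1) (by omega)]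
  · rw [tenacity, add_comm, evenlevel_eq_parityLevel (r := r + 1) (by omega),
      oddlevel_eq_parityLevel hr]

theorem parityLevel_le_of_isAltSeq {n : ℕ} {φ : ℕ → V} (h0 : g.unmatched (φ 0))
    (h : g.IsAltSeq 0 φ n) : g.parityLevel n (φ n) ≤ n := by
  unfold parityLevel
  exact sInf_le ⟨(List.range (n + 1)).map φ, φ 0, ⟨h0, h.altPath⟩, by simp, by simp⟩

theorem exists_isAltSeq_of_parityLevel_eq {r n : ℕ} {v : V} (h : g.parityLevel r v = n) :
    ∃ q : ℕ → V, g.unmatched (q 0) ∧ g.IsAltSeq 0 q n ∧ q n = v ∧ n % 2 = r % 2 := by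
  have hne : {n : ℕ∞ | ∃ p f, g.AltPathFrom p f v ∧ (p.length - 1) % 2 = r % 2 ∧
      n = ((p.length - 1 : ℕ) : ℕ∞)}.Nonempty := by
    by_contra hS
    rw [Set.not_nonempty_iff_eq_empty] at hS
    rw [parityLevel, hS, sInf_empty] at h
    exact ENat.top_ne_natCast n h
  have hmem := csInf_mem hne
  change g.parityLevel r v ∈ _ at hmem
  obtain ⟨p, f, hpf, hpar, hlen⟩ := h ▸ hmem
  obtain rfl : n = p.length - 1 := by exact_mod_cast hlen
  refine ⟨(p.getD · f), ?_, hpf.2.isAltSeq, hpf.2.getD_length_sub_one_s2, hpar⟩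
  simpa only [hpf.2.getD_zero_s2] using hpf.1

theorem parityLevel_append_le {a b c : ℕ} {φ ψ : ℕ → V} (hφ0 : g.unmatched (φ 0))
    (hφ : g.IsAltSeq 0 φ a) (hψ : g.IsAltSeq c ψ b) (hc : a % 2 = c % 2) (hjoin : ψ 0 = φ a)
    (hdisj : ∀ s ≤ a, ∀ t, 0 < t → t ≤ b → φ s ≠ ψ t) :
    g.parityLevel (a + b) (ψ b) ≤ (a + b : ℕ) := by
  have h := parityLevel_le_of_isAltSeq (by simpa using hφ0)
    (hφ.append hψ (by omega) hjoin hdisj)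
  rcases Nat.eq_zero_or_pos b with rfl | hb
  · simpa [hjoin] using h
  · simpa [show ¬ a + b ≤ a by omega] using h

theorem exists_first_meet {q p : ℕ → V} {n lo hi k : ℕ} (hk : lo ≤ k) (hk' : k ≤ hi)
    (hqn : q n = p k) :
    ∃ a ≤ n, ∃ j, lo ≤ j ∧ j ≤ hi ∧ q a = p j ∧
      ∀ s < a, ∀ k, lo ≤ k → k ≤ hi → q s ≠ p k := by
  have hex : ∃ a j, lo ≤ j ∧ j ≤ hi ∧ q a = p j := ⟨n, k, hk, hk', hqn⟩
  obtain ⟨j, hj, hj', hqj⟩ := Nat.find_spec hex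
  exact ⟨Nat.find hex, Nat.find_min' hex ⟨k, hk, hk', hqn⟩, j, hj, hj', hqj,
    fun s hs k h1 h2 hqk => Nat.find_min hex hs ⟨k, h1, h2, hqk⟩⟩

theorem exists_parityLevel_le_of_meet {p q : ℕ → V} {L n lo hi k : ℕ}
    (hp : g.IsAltSeq 0 p L) (hhi : hi ≤ L) (hq0 : g.unmatched (q 0)) (hq : g.IsAltSeq 0 q n)
    (hk : lo ≤ k) (hk' : k ≤ hi) (hqn : q n = p k) :
    ∃ a ≤ n, ∃ j, lo ≤ j ∧ j ≤ hi ∧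
      (a % 2 = j % 2 ∧ g.parityLevel (a + (hi - j)) (p hi) ≤ (a + (hi - j) : ℕ) ∨
        a % 2 ≠ j % 2 ∧ g.parityLevel (a + (j - lo)) (p lo) ≤ (a + (j - lo) : ℕ)) := by
  obtain ⟨a, han, j, hj, hj', hqa, hfirst⟩ := exists_first_meet hk hk' hqn
  have hdisj : ∀ s ≤ a, ∀ k, lo ≤ k → k ≤ hi → k ≠ j → q s ≠ p k := by
    intro s hs k h1 h2 hkj hqk
    rcases hs.lt_or_eq with hs | rfl
    · exact hfirst s hs k h1 h2 hqk
    · exact hkj (hp.injOn (Set.mem_Iic.mpr (by omega)) (Set.mem_Iic.mpr (by omega))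
        (hqk.symm.trans hqa))
  refine ⟨a, han, j, hj, hj', ?_⟩
  by_cases hpar : a % 2 = j % 2
  · refine .inl ⟨hpar, ?_⟩
    have := parityLevel_append_le hq0 (hq.mono han) (hp.shift (j := j) (k := hi - j) (by omega))
      (by omega) (by simp [hqa]) fun s hs t ht ht' => hdisj s hs _ (by omega) (by omega) (by omega)
    rwa [show j + (hi - j) = hi by omega] at this
  · refine .inr ⟨hpar, ?_⟩
    have := parityLevel_append_le hq0 (hq.mono han) (hp.reverse (j := j) (k := j - lo) (by omega)
      (by omega)) (by omega) (by simp [hqa]) fun s hs t ht ht' =>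
        hdisj s hs _ (by omega) (by omega) (by omega)
    rwa [show j - (j - lo) = lo by omega] at this

theorem parityLevel_succ_le_of_meet {p q : ℕ → V} {L n i k : ℕ}
    (hp : g.IsAltSeq 0 p L) (hL : g.parityLevel L (p L) = L)
    (hq0 : g.unmatched (q 0)) (hq : g.IsAltSeq 0 q n) (hni : n < i)
    (hk : i ≤ k) (hkL : k ≤ L) (hqn : q n = p k) :
    g.parityLevel (i + 1) (p i) ≤ (n + (L - i) : ℕ) := by
  obtain ⟨a, han, j, hj, hjL, ⟨hpar, hle⟩ | ⟨hpar, hle⟩⟩ :=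
    exists_parityLevel_le_of_meet hp le_rfl hq0 hq hk hkL hqn
  · rw [parityLevel_congr (show (a + (L - j)) % 2 = L % 2 by omega), hL] at hle
    have : L ≤ a + (L - j) := by exact_mod_cast hle
    omega
  · rw [parityLevel_congr (show (a + (j - i)) % 2 = (i + 1) % 2 by omega)] at hle
    exact hle.trans (by exact_mod_cast (show a + (j - i) ≤ n + (L - i) by omega))

theorem parityLevel_eq_of_tenacity_le {p : ℕ → V} {L i : ℕ} (hp0 : g.unmatched (p 0))
    (hp : g.IsAltSeq 0 p L) (hL : g.parityLevel L (p L) = L) (hiL : i ≤ L)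
    (ht : g.tenacity (p L) ≤ g.tenacity (p i)) :
    g.parityLevel i (p i) = i := by
  refine (parityLevel_le_of_isAltSeq hp0 (hp.mono hiL)).antisymm (not_lt.mp fun hlt => ?_)
  obtain ⟨m, hm⟩ := ENat.ne_top_iff_exists.mp hlt.ne_top
  have hmi : m < i := by rw [← hm] at hlt; exact_mod_cast hlt
  obtain ⟨q, hq0, hq, hqm, -⟩ := exists_isAltSeq_of_parityLevel_eq hm.symm
  rw [tenacity_eq_parityLevel_add L, hL, tenacity_eq_parityLevel_add i, ← hm] at ht
  have hten : ∀ N : ℕ, g.parityLevel (i + 1) (p i) ≤ N →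
      (L : ℕ∞) + g.parityLevel (L + 1) (p L) ≤ (m + N : ℕ) := fun N hN => by
    push_cast
    exact ht.trans (by gcongr)
  have hfirst := hten _ (parityLevel_succ_le_of_meet hp hL hq0 hq hmi le_rfl hiL hqm)
  obtain ⟨l, hl⟩ := ENat.ne_top_iff_exists.mp (ne_top_of_le_ne_top (by simp)
    (le_add_self.trans hfirst))
  rw [← hl] at hfirst
  have hli : l < i := by
    have : L + l ≤ m + (m + (L - i)) := by exact_mod_cast hfirst
    omega
  obtain ⟨r, hr0, hr, hrl, -⟩ := exists_isAltSeq_of_parityLevel_eq hl.symm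
  have hsecond := hten _ (parityLevel_succ_le_of_meet hp hL hr0 hr hli hiL le_rfl hrl)
  rw [← hl] at hsecond
  have : L + l ≤ m + (l + (L - i)) := by exact_mod_cast hsecond
  omega

end MatchedGraph

/-- On an `evenlevel(v)` or `oddlevel(v)` path `p`, every vertex
`u` on `p` with `tenacity(u) ≥ tenacity(v)` is BFS-honest w.r.t. `p`. -/
theorem bfsHonest_of_tenacity_ge (g : MatchedGraph V) (p : List V) (f v : V)
    (hp : g.IsEvenlevelPath p f v ∨ g.IsOddlevelPath p f v)
    (i : ℕ) (hi : i < p.length)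
    (ht : g.tenacity v ≤ g.tenacity (p.getD i f)) :
    g.BFSHonest p f i := by
  obtain ⟨hpf, hL⟩ : g.AltPathFrom p f v ∧
      g.parityLevel (p.length - 1) v = (p.length - 1 : ℕ) := by
    rcases hp with ⟨hpf, hpar, hL⟩ | ⟨hpf, hpar, hL⟩
    · exact ⟨hpf, by rw [← MatchedGraph.evenlevel_eq_parityLevel (Nat.even_iff.mp hpar), hL]⟩
    · exact ⟨hpf, by rw [← MatchedGraph.oddlevel_eq_parityLevel (Nat.odd_iff.mp hpar), hL]⟩
  have hlast := hpf.2.getD_length_sub_one_s2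
  have key := MatchedGraph.parityLevel_eq_of_tenacity_le (p := (p.getD · f)) (i := i)
    (by simpa only [hpf.2.getD_zero_s2] using hpf.1) hpf.2.isAltSeq (by rwa [hlast]) (by omega)
    (by rwa [hlast])
  exact ⟨fun he => (MatchedGraph.evenlevel_eq_parityLevel (Nat.even_iff.mp he) _).trans key,
    fun ho => (MatchedGraph.oddlevel_eq_parityLevel (Nat.odd_iff.mp ho) _).trans key⟩
end

section
/- Let v be a vertex whose tenacity t satisfies t_m <= t < l_m, where t_m is the minimum tenacity of any vertex and l_m is the minimum length of an augmenting path. Then there is an even minimum-length alternating path from an unmatched vertex f to v if and only if there is an odd minimum-length alternating path from f to v. -/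
open scoped Classical

universe u

variable {V : Type u}

/-!
Let `P` be an `evenlevel(v)` path from `f₁` and `Q` an `oddlevel(v)` path from `f₂ ≠ f₁`, of
lengths `e` and `o`, and let `P i = Q j` be the first vertex of `P` lying on `Q`. If `i + j` were
odd, `P` up to `P i` followed by `Q` back to `f₂` would be an augmenting path of length at most
`e + o = tenacity(v) < l_m`. So `i + j` is even, and `P` up to `P i` followed by the rest of `Q` is
an odd alternating path from `f₁` to `v` of length `i + o - j`, whence `j ≤ i`. Symmetrically, the
first vertex `Q j' = P i'` of `Q` on `P` gives `i' ≤ j'`, while the minimality of `i` and `j'`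
gives `i ≤ i'` and `j' ≤ j`. So all four indices agree and the two spliced paths are an
`oddlevel(v)` path from `f₁` and an `evenlevel(v)` path from `f₂`.
-/

theorem ENat.sInf_mem_of_ne_top {s : Set ℕ∞} (h : sInf s ≠ ⊤) : sInf s ∈ s :=
  csInf_mem (Set.nonempty_iff_ne_empty.2 fun he => h (by rw [he, sInf_empty]))

namespace MatchedGraph

variable (g : MatchedGraph V)

/-- Indices are absolute: the edge leaving position `k` must be matched iff `k` is odd, as in
`AltPath`, so a segment may only be shifted by an even amount or reversed by `k ↦ c - k` with
`c` odd. -/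
def IsAltSeqOn (w : ℕ → V) (a b : ℕ) : Prop :=
  Set.InjOn w (Set.Icc a b) ∧
    ∀ k ∈ Set.Ico a b, g.adj (w k) (w (k + 1)) ∧ (g.M (w k) (w (k + 1)) ↔ k % 2 = 1)

variable {g}

namespace IsAltSeqOn

variable {w t : ℕ → V} {a b i j m n : ℕ}

theorem mono (h : g.IsAltSeqOn w a b) {a' b' : ℕ} (ha : a ≤ a') (hb : b' ≤ b) :
    g.IsAltSeqOn w a' b' :=
  ⟨h.1.mono (Set.Icc_subset_Icc ha hb), fun k hk => h.2 k (Set.Ico_subset_Ico ha hb hk)⟩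

theorem shift (h : g.IsAltSeqOn w j n) (hj : j ≤ n) (hij : i % 2 = j % 2) :
    g.IsAltSeqOn (fun k => w (k + j - i)) i (i + (n - j)) := by
  refine ⟨fun x hx y hy hxy => ?_, fun k hk => ?_⟩
  · simp only [Set.mem_Icc] at hx hy
    have := h.1 (by simp only [Set.mem_Icc]; omega : x + j - i ∈ Set.Icc j n)
      (by simp only [Set.mem_Icc]; omega : y + j - i ∈ Set.Icc j n) hxy
    omega
  · simp only [Set.mem_Ico] at hk
    have hsucc : k + 1 + j - i = k + j - i + 1 := by omega
    obtain ⟨hadj, hM⟩ := h.2 (k + j - i) (by simp only [Set.mem_Ico]; omega)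
    dsimp only
    rw [hsucc]
    exact ⟨hadj, hM.trans (by omega)⟩

theorem reverse (h : g.IsAltSeqOn w 0 j) (hij : (i + j) % 2 = 1) :
    g.IsAltSeqOn (fun k => w (i + j - k)) i (i + j) := by
  refine ⟨fun x hx y hy hxy => ?_, fun k hk => ?_⟩
  · simp only [Set.mem_Icc] at hx hy
    have := h.1 (by simp only [Set.mem_Icc]; omega : i + j - x ∈ Set.Icc 0 j)
      (by simp only [Set.mem_Icc]; omega : i + j - y ∈ Set.Icc 0 j) hxy
    omega
  · simp only [Set.mem_Ico] at hk
    have hpred : i + j - k = i + j - (k + 1) + 1 := by omega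
    obtain ⟨hadj, hM⟩ := h.2 (i + j - (k + 1)) (by simp only [Set.mem_Ico]; omega)
    dsimp only
    rw [hpred]
    exact ⟨g.symm _ _ hadj,
      (Iff.intro (g.M_symm _ _) (g.M_symm _ _)).trans (hM.trans (by omega))⟩

theorem append (hw : g.IsAltSeqOn w a m) (ht : g.IsAltSeqOn t m b) (hjoin : w m = t m)
    (hdisj : ∀ x ∈ Set.Ico a m, ∀ y ∈ Set.Icc m b, w x ≠ t y) :
    g.IsAltSeqOn (fun k => if k < m then w k else t k) a b := by
  refine ⟨fun x hx y hy hxy => ?_, fun k hk => ?_⟩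
  · simp only [Set.mem_Icc] at hx hy
    dsimp only at hxy
    split_ifs at hxy with hxm hym hym
    · exact hw.1 ⟨hx.1, hxm.le⟩ ⟨hy.1, hym.le⟩ hxy
    · exact absurd hxy (hdisj x ⟨hx.1, hxm⟩ y ⟨not_lt.1 hym, hy.2⟩)
    · exact absurd hxy.symm (hdisj y ⟨hy.1, hym⟩ x ⟨not_lt.1 hxm, hx.2⟩)
    · exact ht.1 ⟨not_lt.1 hxm, hx.2⟩ ⟨not_lt.1 hym, hy.2⟩ hxy
  · simp only [Set.mem_Ico] at hk
    dsimp only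
    rcases lt_trichotomy (k + 1) m with hk₁ | hk₁ | hk₁
    · rw [if_pos (by omega), if_pos hk₁]
      exact hw.2 k ⟨hk.1, by omega⟩
    · rw [if_pos (by omega), if_neg (by omega), hk₁, ← hjoin, ← hk₁]
      exact hw.2 k ⟨hk.1, by omega⟩
    · rw [if_neg (by omega), if_neg (by omega)]
      exact ht.2 k ⟨by omega, hk.2⟩

theorem altPath (h : g.IsAltSeqOn w 0 n) :
    g.AltPath ((List.range (n + 1)).map w) (w 0) (w n) := by
  refine ⟨by simp [List.head?_map, List.head?_range],
    by simp [List.getLast?_map, List.getLast?_range],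
    List.nodup_map_iff_inj_on List.nodup_range |>.2 fun x hx y hy => h.1 ?_ ?_, fun k hk => ?_⟩
  · simpa [Nat.lt_succ_iff] using hx
  · simpa [Nat.lt_succ_iff] using hy
  · simp only [List.length_map, List.length_range] at hk
    simp only [List.getD_eq_getElem?_getD, List.getElem?_map,
      List.getElem?_range (by omega : k < n + 1), List.getElem?_range (by omega : k + 1 < n + 1),
      Option.map_some, Option.getD_some]
    exact h.2 k ⟨k.zero_le, by omega⟩

end IsAltSeqOn

theorem AltPath.exists_isAltSeqOn {p : List V} {b v : V} (h : g.AltPath p b v) :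
    ∃ w, g.IsAltSeqOn w 0 (p.length - 1) ∧ w 0 = b ∧ w (p.length - 1) = v := by
  obtain ⟨hhead, hlast, hnodup, halt⟩ := h
  have hpos : 0 < p.length := List.length_pos_iff.2 (by rintro rfl; simp at hhead)
  refine ⟨(p.getD · b), ⟨fun x hx y hy hxy => ?_,
    fun k hk => halt k (by simp only [Set.mem_Ico] at hk; omega)⟩, ?_, ?_⟩
  · simp only [Set.mem_Icc] at hx hy
    dsimp only at hxy
    rw [List.getD_eq_getElem _ _ (by omega), List.getD_eq_getElem _ _ (by omega)] at hxy
    exact (hnodup.getElem_inj_iff).1 hxy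
  · dsimp only
    rw [List.getD_eq_getElem?_getD, ← List.head?_eq_getElem?, hhead, Option.getD_some]
  · dsimp only
    rw [List.getD_eq_getElem?_getD, List.getElem?_eq_getElem (by omega), Option.getD_some,
      ← List.getLast_eq_getElem]
    simpa [List.getLast?_eq_some_getLast (List.ne_nil_of_length_pos hpos)] using hlast

namespace IsAltSeqOn

variable {w : ℕ → V} {n : ℕ}

theorem evenlevel_le (h : g.IsAltSeqOn w 0 n) (hf : g.unmatched (w 0)) (hn : n % 2 = 0) :
    g.evenlevel (w n) ≤ n :=
  sInf_le ⟨_, _, ⟨hf, h.altPath⟩, by simpa [Nat.even_iff] using hn, by simp⟩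

theorem oddlevel_le (h : g.IsAltSeqOn w 0 n) (hf : g.unmatched (w 0)) (hn : n % 2 = 1) :
    g.oddlevel (w n) ≤ n :=
  sInf_le ⟨_, _, ⟨hf, h.altPath⟩, by simpa [Nat.odd_iff] using hn, by simp⟩

theorem lm_le (h : g.IsAltSeqOn w 0 n) (hf : g.unmatched (w 0)) (hv : g.unmatched (w n))
    (hne : w 0 ≠ w n) : g.lm ≤ n :=
  sInf_le ⟨_, _, _, ⟨hf, h.altPath⟩, hv, hne, by simp⟩

theorem isEvenlevelPath (h : g.IsAltSeqOn w 0 n) (hf : g.unmatched (w 0)) (hn : n % 2 = 0)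
    (hl : g.evenlevel (w n) = n) : g.IsEvenlevelPath ((List.range (n + 1)).map w) (w 0) (w n) :=
  ⟨⟨hf, h.altPath⟩, by simpa [Nat.even_iff] using hn, by simpa using hl.symm⟩

theorem isOddlevelPath (h : g.IsAltSeqOn w 0 n) (hf : g.unmatched (w 0)) (hn : n % 2 = 1)
    (hl : g.oddlevel (w n) = n) : g.IsOddlevelPath ((List.range (n + 1)).map w) (w 0) (w n) :=
  ⟨⟨hf, h.altPath⟩, by simpa [Nat.odd_iff] using hn, by simpa using hl.symm⟩

end IsAltSeqOn

theorem exists_isEvenlevelPath {v : V} (h : g.evenlevel v ≠ ⊤) :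
    ∃ p f, g.IsEvenlevelPath p f v := by
  obtain ⟨p, f, hp, hpe, hpl⟩ := ENat.sInf_mem_of_ne_top h
  exact ⟨p, f, hp, hpe, hpl.symm⟩

theorem exists_isOddlevelPath {v : V} (h : g.oddlevel v ≠ ⊤) :
    ∃ p f, g.IsOddlevelPath p f v := by
  obtain ⟨p, f, hp, hpe, hpl⟩ := ENat.sInf_mem_of_ne_top h
  exact ⟨p, f, hp, hpe, hpl.symm⟩

theorem exists_first_meeting (w w' : ℕ → V) {n n' : ℕ} (h : w n = w' n') :
    ∃ i ≤ n, ∃ j ≤ n', w i = w' j ∧ ∀ k < i, ∀ l ≤ n', w k ≠ w' l := by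
  have hex : ∃ i, ∃ j ≤ n', w i = w' j := ⟨n, n', le_rfl, h⟩
  obtain ⟨j, hj, hij⟩ := Nat.find_spec hex
  exact ⟨Nat.find hex, Nat.find_min' hex ⟨n', le_rfl, h⟩, j, hj, hij,
    fun k hk l hl hkl => Nat.find_min hex hk ⟨l, hl, hkl⟩⟩

theorem IsAltSeqOn.exists_splice {w w' : ℕ → V} {n n' : ℕ} (hw : g.IsAltSeqOn w 0 n)
    (hw' : g.IsAltSeqOn w' 0 n') (hf : g.unmatched (w 0)) (hf' : g.unmatched (w' 0))
    (hne : w 0 ≠ w' 0) (hv : w n = w' n') (hlt : ((n + n' : ℕ) : ℕ∞) < g.lm) :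
    ∃ i ≤ n, ∃ j ≤ n', w i = w' j ∧ (∀ k < i, ∀ l ≤ n', w k ≠ w' l) ∧ (i + j) % 2 = 0 ∧
      ∃ u, g.IsAltSeqOn u 0 (i + (n' - j)) ∧ u 0 = w 0 ∧ u (i + (n' - j)) = w' n' := by
  obtain ⟨i, hi, j, hj, hij, hfirst⟩ := exists_first_meeting w w' hv
  have hstart : ∀ k, (i = 0 → k = j) → (if 0 < i then w 0 else w' k) = w 0 := by
    intro k hk
    rcases i.eq_zero_or_pos with rfl | hi0
    · simp [hk rfl, hij]
    · simp [hi0]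
  have hpar : (i + j) % 2 = 0 := by
    by_contra hodd
    have haug := (hw.mono le_rfl hi).append ((hw'.mono le_rfl hj).reverse (by omega))
      (by simp [hij]) fun x hx y hy => hfirst x hx.2 _ (by simp only [Set.mem_Icc] at hy; omega)
    -- `w` up to the meeting and then `w'` back to its start would be an augmenting path
    have hlm := haug.lm_le (by rwa [hstart _ (by omega)]) (by simpa using hf')
      (by rw [hstart _ (by omega)]; simpa using hne)
    exact absurd hlt (not_lt.2 (hlm.trans (Nat.cast_le.2 (by omega))))
  refine ⟨i, hi, j, hj, hij, hfirst, hpar, _, (hw.mono le_rfl hi).append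
    ((hw'.mono (Nat.zero_le j) le_rfl).shift hj (by omega)) (by simp [hij])
    (fun x hx y hy => hfirst x hx.2 _ (by simp only [Set.mem_Icc] at hy; omega)),
    hstart _ (by omega), ?_⟩
  rw [if_neg (by omega)]
  congr 1
  omega

theorem IsAltSeqOn.exchange {w w' : ℕ → V} {e o : ℕ} (hw : g.IsAltSeqOn w 0 e)
    (hw' : g.IsAltSeqOn w' 0 o) (hf : g.unmatched (w 0)) (hf' : g.unmatched (w' 0))
    (hne : w 0 ≠ w' 0) (hv : w' o = w e) (he : e % 2 = 0) (ho : o % 2 = 1)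
    (hle : g.evenlevel (w e) = e) (hlo : g.oddlevel (w e) = o) (hlt : ((e + o : ℕ) : ℕ∞) < g.lm) :
    (∃ r, g.IsOddlevelPath r (w 0) (w e)) ∧ ∃ r, g.IsEvenlevelPath r (w' 0) (w e) := by
  obtain ⟨i, hi, j, hj, hij, hfirst, hpar, u, hu, hu0, huv⟩ :=
    hw.exists_splice hw' hf hf' hne hv.symm hlt
  obtain ⟨j', hj', i', hi', hji', hfirst', hpar', u', hu', hu'0, hu'v⟩ :=
    hw'.exists_splice hw hf' hf hne.symm hv (by rwa [add_comm])
  have hii' : i ≤ i' := not_lt.1 fun h => hfirst i' h j' hj' hji'.symm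
  have hjj' : j' ≤ j := not_lt.1 fun h => hfirst' j h i hi hij.symm
  have hji : j ≤ i := by
    have := hu.oddlevel_le (by rwa [hu0]) (by omega)
    rw [huv, hv, hlo] at this
    have := Nat.cast_le.1 this
    omega
  have hij' : i' ≤ j' := by
    have := hu'.evenlevel_le (by rwa [hu'0]) (by omega)
    rw [hu'v, hle] at this
    have := Nat.cast_le.1 this
    omega
  have hio : i + (o - j) = o := by omega
  have hje : j' + (e - i') = e := by omega
  rw [hio, hv] at huv
  rw [hio] at hu
  rw [hje] at hu' hu'v
  constructor
  · have := hu.isOddlevelPath (by rwa [hu0]) ho (by rw [huv, hlo])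
    rw [hu0, huv] at this
    exact ⟨_, this⟩
  · have := hu'.isEvenlevelPath (by rwa [hu'0]) he (by rw [hu'v, hle])
    rw [hu'0, hu'v] at this
    exact ⟨_, this⟩

theorem IsEvenlevelPath.exchange {p q : List V} {f₁ f₂ v : V} (hp : g.IsEvenlevelPath p f₁ v)
    (hq : g.IsOddlevelPath q f₂ v) (hlt : g.tenacity v < g.lm) :
    (∃ r, g.IsOddlevelPath r f₁ v) ∧ ∃ r, g.IsEvenlevelPath r f₂ v := by
  by_cases hff : f₁ = f₂
  · subst hff
    exact ⟨⟨q, hq⟩, p, hp⟩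
  obtain ⟨⟨hf₁, hpa⟩, hpe, hpl⟩ := hp
  obtain ⟨⟨hf₂, hqa⟩, hqo, hql⟩ := hq
  obtain ⟨w, hw, rfl, rfl⟩ := hpa.exists_isAltSeqOn
  obtain ⟨w', hw', rfl, hv⟩ := hqa.exists_isAltSeqOn
  rw [Nat.even_iff] at hpe
  rw [Nat.odd_iff] at hqo
  exact hw.exchange hw' hf₁ hf₂ hff hv hpe hqo hpl.symm hql.symm
    (by rwa [Nat.cast_add, hpl, hql])

end MatchedGraph

theorem exists_evenlevelPath_iff_exists_oddlevelPath_general (g : MatchedGraph V)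
    (v f : V) (h2 : g.tenacity v < g.lm) :
    (∃ p, g.IsEvenlevelPath p f v) ↔ (∃ p, g.IsOddlevelPath p f v) := by
  obtain ⟨heven, hodd⟩ : g.evenlevel v ≠ ⊤ ∧ g.oddlevel v ≠ ⊤ := by
    simpa [MatchedGraph.tenacity] using h2.ne_top
  constructor
  · rintro ⟨p, hp⟩
    obtain ⟨q, f', hq⟩ := MatchedGraph.exists_isOddlevelPath hodd
    exact (hp.exchange hq h2).1
  · rintro ⟨q, hq⟩
    obtain ⟨p, f', hp⟩ := MatchedGraph.exists_isEvenlevelPath heven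
    exact (hp.exchange hq h2).2

/-- For a vertex `v` of eligible tenacity (`t_m ≤ tenacity(v) < l_m`)
and an unmatched vertex `f`, there is an `evenlevel(v)` path starting at `f` iff
there is an `oddlevel(v)` path starting at `f`. -/
theorem exists_evenlevelPath_iff_exists_oddlevelPath (g : MatchedGraph V)
    (v f : V) (hf : g.unmatched f)
    (h1 : g.tm ≤ g.tenacity v) (h2 : g.tenacity v < g.lm) :
    (∃ p, g.IsEvenlevelPath p f v) ↔ (∃ p, g.IsOddlevelPath p f v) :=
  exists_evenlevelPath_iff_exists_oddlevelPath_general g v f h2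
end
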